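/- arXiv:2011.06428 — 2 statements merged into one kernel-verified Lean document; each statement's English description precedes it below -/
import Mathlib

section
/- Let I be a nonempty finite index set and for each i ∈ I let Ω_i be a nonempty finite type, and let Ω = ∏_{i∈I} Ω_i. Let P and Q be strictly positive probability mass functions on Ω (i.e. P(x) > 0 and Q(x) > 0 for all x ∈ Ω, and each sums to 1 over Ω). Suppose that for every coordinate j ∈ I and every configuration x ∈ Ω the full conditional distributions agree, i.e. P(x_j | x_{I∖{j}}) = Q(x_j | x_{I∖{j}}), where P(x_j | x_{I∖{j}}) = P(x) / (∑_{v ∈ Ω_j} P(x with coordinate j replaced by v)) and similarly for Q. Then P = Q. -/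
/-!
The ratio `P / Q` is invariant under changing a single coordinate: the full conditionals of
coordinate `j` agree, so `P x / Q x` equals the ratio of the two marginals of `x` with
coordinate `j` summed out, and those marginals do not depend on `x j`. Changing the coordinates
one at a time connects any two configurations, so `P = c • Q`, and normalisation forces `c = 1`.
-/

open Finset Function

section

variable {I : Type*} [DecidableEq I] {Ω : I → Type*}

theorem apply_eq_apply_of_update_invariant [Fintype I] {α : Type*} {f : (∀ i, Ω i) → α}
    (hf : ∀ x j v, f (update x j v) = f x) (x y : ∀ i, Ω i) : f y = f x := by
  have hpiecewise : ∀ s : Finset I, f (s.piecewise y x) = f x := by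
    intro s
    induction s using Finset.induction with
    | empty => rw [piecewise_empty]
    | insert j s _ ih => rw [piecewise_insert, hf, ih]
  simpa only [piecewise_univ] using hpiecewise univ

variable [∀ i, Fintype (Ω i)]

def marginalExcept (P : (∀ i, Ω i) → ℝ) (j : I) (x : ∀ i, Ω i) : ℝ :=
  ∑ v : Ω j, P (update x j v)

theorem marginalExcept_update (P : (∀ i, Ω i) → ℝ) (j : I) (x : ∀ i, Ω i) (v : Ω j) :
    marginalExcept P j (update x j v) = marginalExcept P j x := by
  simp only [marginalExcept, update_idem]

theorem marginalExcept_pos {P : (∀ i, Ω i) → ℝ} (hP : ∀ x, 0 < P x) (j : I) (x : ∀ i, Ω i) :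
    0 < marginalExcept P j x :=
  sum_pos (fun _ _ => hP _) ⟨x j, mem_univ _⟩

theorem div_eq_marginalExcept_div {P Q : (∀ i, Ω i) → ℝ} (hP : ∀ x, 0 < P x)
    (hQ : ∀ x, 0 < Q x) {j : I} {x : ∀ i, Ω i}
    (hcond : P x / marginalExcept P j x = Q x / marginalExcept Q j x) :
    P x / Q x = marginalExcept P j x / marginalExcept Q j x := by
  rw [div_eq_div_iff (marginalExcept_pos hP j x).ne' (marginalExcept_pos hQ j x).ne'] at hcond
  rw [div_eq_div_iff (hQ x).ne' (marginalExcept_pos hQ j x).ne']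
  linarith

end

theorem eq_of_eq_const_mul_of_sum_eq_one {α : Type*} [Fintype α] {P Q : α → ℝ} {c : ℝ}
    (hPQ : ∀ x, P x = c * Q x) (hPsum : ∑ x, P x = 1) (hQsum : ∑ x, Q x = 1) : P = Q := by
  have hc : c = 1 := by
    simpa only [hPQ, ← mul_sum, hQsum, mul_one] using hPsum
  funext x
  rw [hPQ, hc, one_mul]

theorem full_conditionals_determine_joint_general
    {I : Type*} [Fintype I] [DecidableEq I]
    {Ω : I → Type*} [∀ i, Fintype (Ω i)]
    (P Q : (∀ i, Ω i) → ℝ)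
    (hPpos : ∀ x, 0 < P x) (hQpos : ∀ x, 0 < Q x)
    (hPsum : ∑ x, P x = 1) (hQsum : ∑ x, Q x = 1)
    (hcond : ∀ (j : I) (x : ∀ i, Ω i),
      P x / (∑ v : Ω j, P (Function.update x j v)) =
      Q x / (∑ v : Ω j, Q (Function.update x j v))) :
    P = Q := by
  have hratio_update : ∀ x j (v : Ω j), P (update x j v) / Q (update x j v) = P x / Q x := by
    intro x j v
    rw [div_eq_marginalExcept_div hPpos hQpos (hcond j _),
      div_eq_marginalExcept_div hPpos hQpos (hcond j x),
      marginalExcept_update, marginalExcept_update]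
  funext x
  have hPQ : ∀ y, P y = P x / Q x * Q y := fun y => by
    rw [← apply_eq_apply_of_update_invariant (f := fun z => P z / Q z) hratio_update x y,
      div_mul_cancel₀ _ (hQpos y).ne']
  exact congrFun (eq_of_eq_const_mul_of_sum_eq_one hPQ hPsum hQsum) x

/-- Positive-distribution Hammersley–Clifford / Brook uniqueness: two strictly
positive probability mass functions on a finite product space with the same
univariate full conditionals (each coordinate given all the others) are equal. -/
theorem full_conditionals_determine_joint
    {I : Type*} [Fintype I] [Nonempty I] [DecidableEq I]
    {Ω : I → Type*} [∀ i, Fintype (Ω i)] [∀ i, Nonempty (Ω i)]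
    (P Q : (∀ i, Ω i) → ℝ)
    (hPpos : ∀ x, 0 < P x) (hQpos : ∀ x, 0 < Q x)
    (hPsum : ∑ x, P x = 1) (hQsum : ∑ x, Q x = 1)
    (hcond : ∀ (j : I) (x : ∀ i, Ω i),
      P x / (∑ v : Ω j, P (Function.update x j v)) =
      Q x / (∑ v : Ω j, Q (Function.update x j v))) :
    P = Q :=
  full_conditionals_determine_joint_general P Q hPpos hQpos hPsum hQsum hcond
end

section
/- Let I be a nonempty finite index set, Ω_i nonempty finite types, Ω = ∏_{i∈I} Ω_i, and let P, Q be strictly positive probability mass functions on Ω. Suppose that for every coordinate j ∈ I, ∑_{x∈Ω} P(x) · log Q(x_j | x_{I∖{j}}) = ∑_{x∈Ω} P(x) · log P(x_j | x_{I∖{j}}), where the full conditional of a strictly positive pmf R is R(x_j | x_{I∖{j}}) = R(x) / (∑_{v∈Ω_j} R(x with coordinate j replaced by v)). Then Q = P. -/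
/-!
Write `R(· | x₋ⱼ)` for the full conditional of `R` in coordinate `j`. Since
`log t ≤ t - 1`, the gap `∑ P log P(·|x₋ⱼ) - ∑ P log Q(·|x₋ⱼ)` is bounded below by
`∑ P - ∑ P · Q(·|x₋ⱼ) / P(·|x₋ⱼ)`, which vanishes after resumming over the fibres of
coordinate `j`; equality then forces `Q(·|x₋ⱼ) = P(·|x₋ⱼ)`. Equal full conditionals make
`Q / P` invariant under changing any single coordinate, hence constant (Brook's lemma), and the
normalisation makes the constant `1`.
-/

open Finset Function Real

/-- `R(x_j | x_{-j})`. -/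
noncomputable def fullCond {I : Type*} [DecidableEq I] {Ω : I → Type*} [∀ i, Fintype (Ω i)]
    (R : (∀ i, Ω i) → ℝ) (j : I) (x : ∀ i, Ω i) : ℝ :=
  R x / ∑ v : Ω j, R (update x j v)

theorem eq_one_of_sum_mul_log_nonneg {α : Type*} [Fintype α] {w t : α → ℝ}
    (hw : ∀ a, 0 < w a) (ht : ∀ a, 0 < t a) (hsum : ∑ a, w a * t a ≤ ∑ a, w a)
    (hlog : 0 ≤ ∑ a, w a * log (t a)) (a : α) : t a = 1 := by
  by_contra hne
  have hle : ∀ b ∈ univ, w b * log (t b) ≤ w b * (t b - 1) := fun b _ =>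
    mul_le_mul_of_nonneg_left (log_le_sub_one_of_pos (ht b)) (hw b).le
  have hlt : w a * log (t a) < w a * (t a - 1) :=
    mul_lt_mul_of_pos_left (log_lt_sub_one_of_pos (ht a) hne) (hw a)
  have : ∑ b, w b * log (t b) < ∑ b, w b * (t b - 1) :=
    sum_lt_sum hle ⟨a, mem_univ a, hlt⟩
  simp only [mul_sub, mul_one, sum_sub_distrib] at this
  linarith

theorem Function.eq_of_forall_update_eq {I : Type*} [Fintype I] [DecidableEq I]
    {Ω : I → Type*} {β : Type*} {f : (∀ i, Ω i) → β}
    (hf : ∀ x j v, f (update x j v) = f x) (x y : ∀ i, Ω i) : f x = f y := by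
  suffices ∀ s : Finset I, ∀ x, (∀ i ∉ s, x i = y i) → f x = f y from
    this univ x fun i hi => absurd (mem_univ i) hi
  intro s
  induction s using Finset.induction_on with
  | empty => exact fun x hx => congrArg f (funext fun i => hx i (notMem_empty i))
  | insert a s _ ih =>
    intro x hx
    rw [← hf x a (y a)]
    refine ih _ fun i hi => ?_
    rcases eq_or_ne i a with rfl | hia
    · exact update_self ..
    · rw [update_of_ne hia]
      exact hx i (by simp [hia, hi])

section FullConditional

variable {I : Type*} [DecidableEq I] {Ω : I → Type*}

/-- Swapping the roles of `x` and `update x j v` is a bijection of `Ω j × ∀ i, Ω i`: it is the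
involution `(v, x) ↦ (x j, update x j v)`. -/
theorem sum_sum_update_comm [Fintype I] [∀ i, Fintype (Ω i)] {β : Type*} [AddCommMonoid β]
    (F : (∀ i, Ω i) → (∀ i, Ω i) → β) (j : I) :
    ∑ x, ∑ v : Ω j, F x (update x j v) = ∑ x, ∑ v : Ω j, F (update x j v) x := by
  let σ : Ω j × (∀ i, Ω i) → Ω j × (∀ i, Ω i) := fun p => (p.2 j, update p.2 j p.1)
  have hσ : Involutive σ := fun p => by simp [σ]
  rw [← Fintype.sum_prod_type_right' (fun v x => F x (update x j v)),
    ← Fintype.sum_prod_type_right' (fun v x => F (update x j v) x),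
    ← Equiv.sum_comp (hσ.toPerm σ)]
  simp [σ]

variable [∀ i, Fintype (Ω i)] {P Q R : (∀ i, Ω i) → ℝ}

theorem sum_update_pos (hR : ∀ x, 0 < R x) (j : I) (x : ∀ i, Ω i) :
    0 < ∑ v : Ω j, R (update x j v) :=
  sum_pos (fun _ _ => hR _) ⟨x j, mem_univ _⟩

theorem div_fullCond (hR : ∀ x, 0 < R x) (j : I) (x : ∀ i, Ω i) :
    R x / fullCond R j x = ∑ v : Ω j, R (update x j v) :=
  div_div_cancel₀ (hR x).ne'

theorem sum_fullCond_update (hR : ∀ x, 0 < R x) (j : I) (x : ∀ i, Ω i) :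
    ∑ v : Ω j, fullCond R j (update x j v) = 1 := by
  simp only [fullCond, update_idem, ← sum_div]
  exact div_self (sum_update_pos hR j x).ne'

theorem sum_mul_fullCond_div_fullCond [Fintype I] (hP : ∀ x, 0 < P x) (hQ : ∀ x, 0 < Q x)
    (j : I) : ∑ x, P x * (fullCond Q j x / fullCond P j x) = ∑ x, P x :=
  calc ∑ x, P x * (fullCond Q j x / fullCond P j x)
      = ∑ x, ∑ v : Ω j, P (update x j v) * fullCond Q j x := by
        simp only [← sum_mul, ← div_fullCond hP j, mul_div_assoc']
        exact sum_congr rfl fun x _ => (div_mul_eq_mul_div _ _ _).symm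
    _ = ∑ x, ∑ v : Ω j, P x * fullCond Q j (update x j v) :=
        sum_sum_update_comm (fun x y => P y * fullCond Q j x) j
    _ = ∑ x, P x := by simp only [← mul_sum, sum_fullCond_update hQ, mul_one]

theorem fullCond_eq_of_sum_mul_log_fullCond_le [Fintype I] (hP : ∀ x, 0 < P x)
    (hQ : ∀ x, 0 < Q x) (j : I)
    (h : ∑ x, P x * log (fullCond P j x) ≤ ∑ x, P x * log (fullCond Q j x)) :
    fullCond Q j = fullCond P j := by
  have hPc : ∀ x, 0 < fullCond P j x := fun x => div_pos (hP x) (sum_update_pos hP j x)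
  have hQc : ∀ x, 0 < fullCond Q j x := fun x => div_pos (hQ x) (sum_update_pos hQ j x)
  have hlog : ∑ x, P x * log (fullCond Q j x / fullCond P j x) =
      ∑ x, P x * log (fullCond Q j x) - ∑ x, P x * log (fullCond P j x) := by
    rw [← sum_sub_distrib]
    refine sum_congr rfl fun x _ => ?_
    rw [log_div (hQc x).ne' (hPc x).ne', mul_sub]
  funext x
  refine (div_eq_one_iff_eq (hPc x).ne').mp (eq_one_of_sum_mul_log_nonneg hP
    (fun x => div_pos (hQc x) (hPc x)) (sum_mul_fullCond_div_fullCond hP hQ j).le ?_ x)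
  rw [hlog]
  linarith

theorem div_eq_div_sum_update_of_fullCond_eq (hP : ∀ x, 0 < P x) (hQ : ∀ x, 0 < Q x) {j : I}
    (h : fullCond P j = fullCond Q j) (x : ∀ i, Ω i) :
    Q x / P x = (∑ v : Ω j, Q (update x j v)) / ∑ v : Ω j, P (update x j v) := by
  have hx := congrFun h x
  rw [fullCond, fullCond, div_eq_div_iff (sum_update_pos hP j x).ne'
    (sum_update_pos hQ j x).ne'] at hx
  rw [div_eq_div_iff (hP x).ne' (sum_update_pos hP j x).ne']
  linarith

/-- Brook's lemma. -/
theorem eq_of_fullCond_eq [Fintype I] (hP : ∀ x, 0 < P x) (hQ : ∀ x, 0 < Q x)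
    (h : ∀ j, fullCond P j = fullCond Q j) (hsum : ∑ x, P x = ∑ x, Q x) : P = Q := by
  funext x
  have hconst : ∀ y, Q y / P y = Q x / P x := fun y =>
    eq_of_forall_update_eq (f := fun z => Q z / P z) (fun z j v => by
      simp only [div_eq_div_sum_update_of_fullCond_eq hP hQ (h j), update_idem]) y x
  have hQsum : ∑ y, Q y = Q x / P x * ∑ y, P y := by
    rw [mul_sum]
    exact sum_congr rfl fun y _ => by rw [← hconst y, div_mul_cancel₀ _ (hP y).ne']
  have hPsum_pos : 0 < ∑ y, P y := sum_pos (fun y _ => hP y) ⟨x, mem_univ x⟩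
  rw [← hsum, eq_comm, mul_eq_right₀ hPsum_pos.ne', div_eq_one_iff_eq (hP x).ne'] at hQsum
  exact hQsum.symm

end FullConditional

theorem pseudo_logLikelihood_maximizer_eq_general
    {I : Type*} [Fintype I] [DecidableEq I]
    {Ω : I → Type*} [∀ i, Fintype (Ω i)]
    (P Q : (∀ i, Ω i) → ℝ)
    (hPpos : ∀ x, 0 < P x) (hQpos : ∀ x, 0 < Q x)
    (hPsum : ∑ x, P x = 1) (hQsum : ∑ x, Q x = 1)
    (heq : ∀ j : I,
      ∑ x, P x * Real.log (Q x / (∑ v : Ω j, Q (Function.update x j v))) =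
      ∑ x, P x * Real.log (P x / (∑ v : Ω j, P (Function.update x j v)))) :
    Q = P := by
  have hcond : ∀ j, fullCond Q j = fullCond P j := fun j =>
    fullCond_eq_of_sum_mul_log_fullCond_le hPpos hQpos j (heq j).ge
  exact eq_of_fullCond_eq hQpos hPpos hcond (hQsum.trans hPsum.symm)

/-- Two-step structure of the proof of Theorem 1: a strictly positive `Q` that
attains, for every coordinate `j`, the maximal expected conditional
log-likelihood under the strictly positive truth `P` must equal `P`. -/
theorem pseudo_logLikelihood_maximizer_eq
    {I : Type*} [Fintype I] [Nonempty I] [DecidableEq I]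
    {Ω : I → Type*} [∀ i, Fintype (Ω i)] [∀ i, Nonempty (Ω i)]
    (P Q : (∀ i, Ω i) → ℝ)
    (hPpos : ∀ x, 0 < P x) (hQpos : ∀ x, 0 < Q x)
    (hPsum : ∑ x, P x = 1) (hQsum : ∑ x, Q x = 1)
    (heq : ∀ j : I,
      ∑ x, P x * Real.log (Q x / (∑ v : Ω j, Q (Function.update x j v))) =
      ∑ x, P x * Real.log (P x / (∑ v : Ω j, P (Function.update x j v)))) :
    Q = P :=
  pseudo_logLikelihood_maximizer_eq_general P Q hPpos hQpos hPsum hQsum heq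
end
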